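/- There exists an infinite squarefree word w over Σ₅ = {0,1,2,3,4} such that if x is a subword of w with |x| ≥ 2, then x^R is not a subword of w. -/
import Mathlib

/-- `x` occurs as a contiguous block of consecutive letters of the infinite word `w`. -/
def IsFactor {α : Type*} (x : List α) (w : ℕ → α) : Prop :=
  ∃ i : ℕ, x = (List.range x.length).map fun j => w (i + j)

namespace SQF

def f0 : Fin 5 → Fin 5 := ![0, 0, 2, 0, 1]
def f1 : Fin 5 → Fin 5 := ![1, 3, 3, 3, 2]
def f2 : Fin 5 → Fin 5 := ![2, 1, 4, 4, 4]

def w : ℕ → Fin 5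
  | 0 => 0
  | n+1 =>
    have : (n+1)/3 < n+1 := Nat.div_lt_self (Nat.succ_pos n) (by norm_num)
    let a := w ((n+1)/3)
    if (n+1) % 3 = 0 then f0 a else if (n+1) % 3 = 1 then f1 a else f2 a

lemma w_def (n : ℕ) :
    w n = if n % 3 = 0 then f0 (w (n/3)) else if n % 3 = 1 then f1 (w (n/3)) else f2 (w (n/3)) := by
  cases n with
  | zero => simp [w]; decide
  | succ n => rw [w]

lemma w3 (q : ℕ) : w (3*q) = f0 (w q) := by
  rw [w_def]; simp [Nat.mul_div_cancel_left, Nat.mul_mod_right]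

lemma w3a (q : ℕ) : w (3*q+1) = f1 (w q) := by
  rw [w_def]
  have h1 : (3*q+1) % 3 = 1 := by omega
  have h2 : (3*q+1) / 3 = q := by omega
  rw [h1, h2]; norm_num

lemma w3b (q : ℕ) : w (3*q+2) = f2 (w q) := by
  rw [w_def]
  have h1 : (3*q+2) % 3 = 2 := by omega
  have h2 : (3*q+2) / 3 = q := by omega
  rw [h1, h2]; norm_num

def win (i ℓ : ℕ) : List (Fin 5) := (List.range ℓ).map fun j => w (i+j)

def expand (xs : List (Fin 5)) : List (Fin 5) := xs.flatMap fun a => [f0 a, f1 a, f2 a]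

lemma expand_win (t q : ℕ) : expand (win q t) = (List.range (3*t)).map fun j => w (3*q+j) := by
  induction t with
  | zero => rfl
  | succ t ih =>
    have h1 : win q (t+1) = win q t ++ [w (q+t)] := by simp [win, List.range_succ]
    have h2 : 3*(t+1) = 3*t + 1 + 1 + 1 := by ring
    rw [h1, h2]
    simp only [expand, List.flatMap_append] at *
    rw [ih]
    simp [List.range_succ]
    refine ⟨?_, ?_, ?_⟩
    · have : 3*q + 3*t = 3*(q+t) := by ring
      rw [this, w3]
    · have : 3*q + (3*t+1) = 3*(q+t)+1 := by ring
      rw [this, w3a]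
    · have : 3*q + (3*t+1+1) = 3*(q+t)+2 := by ring
      rw [this, w3b]

lemma win_slice (q s ℓ t : ℕ) (h : s + ℓ ≤ 3 * t) :
    win (3*q+s) ℓ = ((expand (win q t)).drop s).take ℓ := by
  rw [expand_win]
  apply List.ext_getElem
  · simp [win]; omega
  · intro j h1 h2
    simp only [win, List.getElem_take, List.getElem_drop, List.getElem_map, List.getElem_range]
    congr 1
    omega

def F1 : List (List (Fin 5)) := [[0],[1],[2],[3],[4]]
def F2 : List (List (Fin 5)) := [[0,1],[0,3],[1,2],[2,0],[2,3],[2,4],[3,1],[3,4],[4,0],[4,1]]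
def F3 : List (List (Fin 5)) := [[0,1,2],[0,3,1],[0,3,4],[1,2,0],[1,2,3],[1,2,4],[2,0,3],[2,3,4],[2,4,0],[3,1,2],[3,4,0],[3,4,1],[4,0,1],[4,0,3],[4,1,2]]
def F4 : List (List (Fin 5)) := [[0,1,2,0],[0,3,1,2],[0,3,4,0],[0,3,4,1],[1,2,0,3],[1,2,3,4],[1,2,4,0],[2,0,3,1],[2,0,3,4],[2,3,4,0],[2,3,4,1],[2,4,0,1],[2,4,0,3],[3,1,2,3],[3,4,0,1],[3,4,0,3],[3,4,1,2],[4,0,1,2],[4,0,3,1],[4,0,3,4],[4,1,2,4]]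
def F5 : List (List (Fin 5)) := [[0,1,2,0,3],[0,3,1,2,3],[0,3,4,0,3],[0,3,4,1,2],[1,2,0,3,1],[1,2,0,3,4],[1,2,3,4,0],[1,2,3,4,1],[1,2,4,0,1],[1,2,4,0,3],[2,0,3,1,2],[2,0,3,4,0],[2,0,3,4,1],[2,3,4,0,1],[2,3,4,0,3],[2,3,4,1,2],[2,4,0,1,2],[2,4,0,3,1],[3,1,2,3,4],[3,4,0,1,2],[3,4,0,3,1],[3,4,0,3,4],[3,4,1,2,4],[4,0,1,2,0],[4,0,3,1,2],[4,0,3,4,1],[4,1,2,4,0]]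
def F6 : List (List (Fin 5)) := [[0,1,2,0,3,1],[0,1,2,0,3,4],[0,3,1,2,3,4],[0,3,4,0,3,1],[0,3,4,1,2,4],[1,2,0,3,1,2],[1,2,0,3,4,0],[1,2,0,3,4,1],[1,2,3,4,0,1],[1,2,3,4,0,3],[1,2,3,4,1,2],[1,2,4,0,1,2],[1,2,4,0,3,1],[2,0,3,1,2,3],[2,0,3,4,0,3],[2,0,3,4,1,2],[2,3,4,0,1,2],[2,3,4,0,3,4],[2,3,4,1,2,4],[2,4,0,1,2,0],[2,4,0,3,1,2],[3,1,2,3,4,0],[3,1,2,3,4,1],[3,4,0,1,2,0],[3,4,0,3,1,2],[3,4,0,3,4,1],[3,4,1,2,4,0],[4,0,1,2,0,3],[4,0,3,1,2,3],[4,0,3,4,1,2],[4,1,2,4,0,1],[4,1,2,4,0,3]]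
def F7 : List (List (Fin 5)) := [[0,1,2,0,3,1,2],[0,1,2,0,3,4,0],[0,1,2,0,3,4,1],[0,3,1,2,3,4,0],[0,3,1,2,3,4,1],[0,3,4,0,3,1,2],[0,3,4,1,2,4,0],[1,2,0,3,1,2,3],[1,2,0,3,4,0,3],[1,2,0,3,4,1,2],[1,2,3,4,0,1,2],[1,2,3,4,0,3,4],[1,2,3,4,1,2,4],[1,2,4,0,1,2,0],[1,2,4,0,3,1,2],[2,0,3,1,2,3,4],[2,0,3,4,0,3,1],[2,0,3,4,1,2,4],[2,3,4,0,1,2,0],[2,3,4,0,3,4,1],[2,3,4,1,2,4,0],[2,4,0,1,2,0,3],[2,4,0,3,1,2,3],[3,1,2,3,4,0,1],[3,1,2,3,4,0,3],[3,1,2,3,4,1,2],[3,4,0,1,2,0,3],[3,4,0,3,1,2,3],[3,4,0,3,4,1,2],[3,4,1,2,4,0,1],[3,4,1,2,4,0,3],[4,0,1,2,0,3,1],[4,0,1,2,0,3,4],[4,0,3,1,2,3,4],[4,0,3,4,1,2,4],[4,1,2,4,0,1,2],[4,1,2,4,0,3,1]]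
def F11 : List (List (Fin 5)) := [[0,1,2,0,3,1,2,3,4,0,1],[0,1,2,0,3,4,0,3,1,2,3],[0,1,2,0,3,4,1,2,4,0,1],[0,1,2,0,3,4,1,2,4,0,3],[0,3,1,2,3,4,0,1,2,0,3],[0,3,1,2,3,4,0,3,4,1,2],[0,3,1,2,3,4,1,2,4,0,1],[0,3,4,0,3,1,2,3,4,0,3],[0,3,4,1,2,4,0,1,2,0,3],[0,3,4,1,2,4,0,3,1,2,3],[1,2,0,3,1,2,3,4,0,1,2],[1,2,0,3,4,0,3,1,2,3,4],[1,2,0,3,4,1,2,4,0,1,2],[1,2,0,3,4,1,2,4,0,3,1],[1,2,3,4,0,1,2,0,3,4,0],[1,2,3,4,0,1,2,0,3,4,1],[1,2,3,4,0,3,4,1,2,4,0],[1,2,3,4,1,2,4,0,1,2,0],[1,2,4,0,1,2,0,3,1,2,3],[1,2,4,0,1,2,0,3,4,0,3],[1,2,4,0,1,2,0,3,4,1,2],[1,2,4,0,3,1,2,3,4,1,2],[2,0,3,1,2,3,4,0,1,2,0],[2,0,3,4,0,3,1,2,3,4,0],[2,0,3,4,1,2,4,0,1,2,0],[2,0,3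,4,1,2,4,0,3,1,2],[2,3,4,0,1,2,0,3,4,0,3],[2,3,4,0,1,2,0,3,4,1,2],[2,3,4,0,3,4,1,2,4,0,1],[2,3,4,0,3,4,1,2,4,0,3],[2,3,4,1,2,4,0,1,2,0,3],[2,4,0,1,2,0,3,1,2,3,4],[2,4,0,1,2,0,3,4,0,3,1],[2,4,0,1,2,0,3,4,1,2,4],[2,4,0,3,1,2,3,4,1,2,4],[3,1,2,3,4,0,1,2,0,3,4],[3,1,2,3,4,0,3,4,1,2,4],[3,1,2,3,4,1,2,4,0,1,2],[3,4,0,1,2,0,3,4,0,3,1],[3,4,0,1,2,0,3,4,1,2,4],[3,4,0,3,1,2,3,4,0,3,4],[3,4,0,3,4,1,2,4,0,1,2],[3,4,0,3,4,1,2,4,0,3,1],[3,4,1,2,4,0,1,2,0,3,1],[3,4,1,2,4,0,1,2,0,3,4],[3,4,1,2,4,0,3,1,2,3,4],[4,0,1,2,0,3,1,2,3,4,0],[4,0,1,2,0,3,4,0,3,1,2],[4,0,1,2,0,3,4,1,2,4,0],[4,0,3,1,2,3,4,0,3,4,1],[4,0,3,1,2,3,4,1,2,4,0],[4,0,3,4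,1,2,4,0,1,2,0],[4,0,3,4,1,2,4,0,3,1,2],[4,1,2,4,0,1,2,0,3,1,2],[4,1,2,4,0,1,2,0,3,4,0],[4,1,2,4,0,1,2,0,3,4,1],[4,1,2,4,0,3,1,2,3,4,1]]
def F17 : List (List (Fin 5)) := [[0,1,2,0,3,1,2,3,4,0,1,2,0,3,4,0,3],[0,1,2,0,3,1,2,3,4,0,1,2,0,3,4,1,2],[0,1,2,0,3,4,0,3,1,2,3,4,0,3,4,1,2],[0,1,2,0,3,4,1,2,4,0,1,2,0,3,4,0,3],[0,1,2,0,3,4,1,2,4,0,3,1,2,3,4,1,2],[0,3,1,2,3,4,0,1,2,0,3,4,0,3,1,2,3],[0,3,1,2,3,4,0,1,2,0,3,4,1,2,4,0,1],[0,3,1,2,3,4,0,1,2,0,3,4,1,2,4,0,3],[0,3,1,2,3,4,0,3,4,1,2,4,0,1,2,0,3],[0,3,1,2,3,4,0,3,4,1,2,4,0,3,1,2,3],[0,3,1,2,3,4,1,2,4,0,1,2,0,3,1,2,3],[0,3,1,2,3,4,1,2,4,0,1,2,0,3,4,0,3],[0,3,4,0,3,1,2,3,4,0,3,4,1,2,4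,0,1],[0,3,4,0,3,1,2,3,4,0,3,4,1,2,4,0,3],[0,3,4,1,2,4,0,1,2,0,3,1,2,3,4,0,1],[0,3,4,1,2,4,0,1,2,0,3,4,0,3,1,2,3],[0,3,4,1,2,4,0,1,2,0,3,4,1,2,4,0,3],[0,3,4,1,2,4,0,3,1,2,3,4,1,2,4,0,1],[1,2,0,3,1,2,3,4,0,1,2,0,3,4,0,3,1],[1,2,0,3,1,2,3,4,0,1,2,0,3,4,1,2,4],[1,2,0,3,4,0,3,1,2,3,4,0,3,4,1,2,4],[1,2,0,3,4,1,2,4,0,1,2,0,3,4,0,3,1],[1,2,0,3,4,1,2,4,0,3,1,2,3,4,1,2,4],[1,2,3,4,0,1,2,0,3,4,0,3,1,2,3,4,0],[1,2,3,4,0,1,2,0,3,4,1,2,4,0,1,2,0],[1,2,3,4,0,1,2,0,3,4,1,2,4,0,3,1,2],[1,2,3,4,0,3,4,1,2,4,0,1,2,0,3,1,2],[1,2,3,4,0,3,4,1,2,4,0,1,2,0,3,4,1],[1,2,3,4,0,3,4,1,2,4,0,3,1,2,3,4,1],[1,2,3,4,1,2,4,0,1,2,0,3,1,2,3,4,0]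,[1,2,3,4,1,2,4,0,1,2,0,3,4,0,3,1,2],[1,2,4,0,1,2,0,3,1,2,3,4,0,1,2,0,3],[1,2,4,0,1,2,0,3,4,0,3,1,2,3,4,0,3],[1,2,4,0,1,2,0,3,4,1,2,4,0,3,1,2,3],[1,2,4,0,3,1,2,3,4,1,2,4,0,1,2,0,3],[2,0,3,1,2,3,4,0,1,2,0,3,4,0,3,1,2],[2,0,3,1,2,3,4,0,1,2,0,3,4,1,2,4,0],[2,0,3,4,0,3,1,2,3,4,0,3,4,1,2,4,0],[2,0,3,4,1,2,4,0,1,2,0,3,4,0,3,1,2],[2,0,3,4,1,2,4,0,3,1,2,3,4,1,2,4,0],[2,3,4,0,1,2,0,3,4,0,3,1,2,3,4,0,3],[2,3,4,0,1,2,0,3,4,1,2,4,0,1,2,0,3],[2,3,4,0,1,2,0,3,4,1,2,4,0,3,1,2,3],[2,3,4,0,3,4,1,2,4,0,1,2,0,3,1,2,3],[2,3,4,0,3,4,1,2,4,0,1,2,0,3,4,1,2],[2,3,4,0,3,4,1,2,4,0,3,1,2,3,4,1,2],[2,3,4,1,2,4,0,1,2,0,3,1,2,3,4,0,1],[2,3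,4,1,2,4,0,1,2,0,3,4,0,3,1,2,3],[2,4,0,1,2,0,3,1,2,3,4,0,1,2,0,3,4],[2,4,0,1,2,0,3,4,0,3,1,2,3,4,0,3,4],[2,4,0,1,2,0,3,4,1,2,4,0,3,1,2,3,4],[2,4,0,3,1,2,3,4,1,2,4,0,1,2,0,3,1],[2,4,0,3,1,2,3,4,1,2,4,0,1,2,0,3,4],[3,1,2,3,4,0,1,2,0,3,4,0,3,1,2,3,4],[3,1,2,3,4,0,1,2,0,3,4,1,2,4,0,1,2],[3,1,2,3,4,0,1,2,0,3,4,1,2,4,0,3,1],[3,1,2,3,4,0,3,4,1,2,4,0,1,2,0,3,1],[3,1,2,3,4,0,3,4,1,2,4,0,1,2,0,3,4],[3,1,2,3,4,0,3,4,1,2,4,0,3,1,2,3,4],[3,1,2,3,4,1,2,4,0,1,2,0,3,1,2,3,4],[3,1,2,3,4,1,2,4,0,1,2,0,3,4,0,3,1],[3,4,0,1,2,0,3,4,0,3,1,2,3,4,0,3,4],[3,4,0,1,2,0,3,4,1,2,4,0,1,2,0,3,4],[3,4,0,1,2,0,3,4,1,2,4,0,3,1,2,3,4],[3,4,0,3,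1,2,3,4,0,3,4,1,2,4,0,1,2],[3,4,0,3,1,2,3,4,0,3,4,1,2,4,0,3,1],[3,4,0,3,4,1,2,4,0,1,2,0,3,1,2,3,4],[3,4,0,3,4,1,2,4,0,1,2,0,3,4,1,2,4],[3,4,0,3,4,1,2,4,0,3,1,2,3,4,1,2,4],[3,4,1,2,4,0,1,2,0,3,1,2,3,4,0,1,2],[3,4,1,2,4,0,1,2,0,3,4,0,3,1,2,3,4],[3,4,1,2,4,0,1,2,0,3,4,1,2,4,0,3,1],[3,4,1,2,4,0,3,1,2,3,4,1,2,4,0,1,2],[4,0,1,2,0,3,1,2,3,4,0,1,2,0,3,4,0],[4,0,1,2,0,3,1,2,3,4,0,1,2,0,3,4,1],[4,0,1,2,0,3,4,0,3,1,2,3,4,0,3,4,1],[4,0,1,2,0,3,4,1,2,4,0,1,2,0,3,4,0],[4,0,1,2,0,3,4,1,2,4,0,3,1,2,3,4,1],[4,0,3,1,2,3,4,0,3,4,1,2,4,0,1,2,0],[4,0,3,1,2,3,4,0,3,4,1,2,4,0,3,1,2],[4,0,3,1,2,3,4,1,2,4,0,1,2,0,3,1,2],[4,0,3,1,2,3,4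,1,2,4,0,1,2,0,3,4,0],[4,0,3,4,1,2,4,0,1,2,0,3,1,2,3,4,0],[4,0,3,4,1,2,4,0,1,2,0,3,4,1,2,4,0],[4,0,3,4,1,2,4,0,3,1,2,3,4,1,2,4,0],[4,1,2,4,0,1,2,0,3,1,2,3,4,0,1,2,0],[4,1,2,4,0,1,2,0,3,4,0,3,1,2,3,4,0],[4,1,2,4,0,1,2,0,3,4,1,2,4,0,3,1,2],[4,1,2,4,0,3,1,2,3,4,1,2,4,0,1,2,0]]
def P0 : List (List (Fin 5)) := [[0,1,2],[0,3,1],[0,3,4],[1,2,4],[2,3,4]]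
def P1 : List (List (Fin 5)) := [[1,2,0],[2,4,0],[3,1,2],[3,4,0],[3,4,1]]
def P2 : List (List (Fin 5)) := [[1,2,3],[2,0,3],[4,0,1],[4,0,3],[4,1,2]]

lemma split3 (n : ℕ) : ∃ q s, s < 3 ∧ n = 3*q + s :=
  ⟨n/3, n%3, Nat.mod_lt _ (by norm_num), by omega⟩

lemma memF1 (n : ℕ) : win n 1 ∈ F1 := by
  have h : win n 1 = [w n] := by simp [win, List.range_succ]
  rw [h]
  have h2 : ∀ a : Fin 5, [a] ∈ F1 := by decide
  exact h2 _

lemma memF2 : ∀ n, win n 2 ∈ F2 := by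
  intro n
  induction n using Nat.strong_induction_on with
  | _ n ih =>
    obtain ⟨q, s, hs, rfl⟩ := split3 n
    have c0 : ∀ u ∈ F1, ((expand u).drop 0).take 2 ∈ F2 := by decide
    have c1 : ∀ u ∈ F1, ((expand u).drop 1).take 2 ∈ F2 := by decide
    have c2 : ∀ u ∈ F2, ((expand u).drop 2).take 2 ∈ F2 := by decide
    interval_cases s
    · rw [win_slice q 0 2 1 (by norm_num)]; exact c0 _ (memF1 q)
    · rw [win_slice q 1 2 1 (by norm_num)]; exact c1 _ (memF1 q)
    · rw [win_slice q 2 2 2 (by norm_num)]; exact c2 _ (ih q (by omega))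

lemma memF3 (n : ℕ) : win n 3 ∈ F3 := by
  obtain ⟨q, s, hs, rfl⟩ := split3 n
  have c0 : ∀ u ∈ F1, ((expand u).drop 0).take 3 ∈ F3 := by decide
  have c1 : ∀ u ∈ F2, ((expand u).drop 1).take 3 ∈ F3 := by decide
  have c2 : ∀ u ∈ F2, ((expand u).drop 2).take 3 ∈ F3 := by decide
  interval_cases s
  · rw [win_slice q 0 3 1 (by norm_num)]; exact c0 _ (memF1 q)
  · rw [win_slice q 1 3 2 (by norm_num)]; exact c1 _ (memF2 q)
  · rw [win_slice q 2 3 2 (by norm_num)]; exact c2 _ (memF2 q)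

lemma memF4 (n : ℕ) : win n 4 ∈ F4 := by
  obtain ⟨q, s, hs, rfl⟩ := split3 n
  have c0 : ∀ u ∈ F2, ((expand u).drop 0).take 4 ∈ F4 := by decide
  have c1 : ∀ u ∈ F2, ((expand u).drop 1).take 4 ∈ F4 := by decide
  have c2 : ∀ u ∈ F2, ((expand u).drop 2).take 4 ∈ F4 := by decide
  interval_cases s
  · rw [win_slice q 0 4 2 (by norm_num)]; exact c0 _ (memF2 q)
  · rw [win_slice q 1 4 2 (by norm_num)]; exact c1 _ (memF2 q)
  · rw [win_slice q 2 4 2 (by norm_num)]; exact c2 _ (memF2 q)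

lemma memF5 (n : ℕ) : win n 5 ∈ F5 := by
  obtain ⟨q, s, hs, rfl⟩ := split3 n
  have c0 : ∀ u ∈ F2, ((expand u).drop 0).take 5 ∈ F5 := by decide
  have c1 : ∀ u ∈ F2, ((expand u).drop 1).take 5 ∈ F5 := by decide
  have c2 : ∀ u ∈ F3, ((expand u).drop 2).take 5 ∈ F5 := by decide
  interval_cases s
  · rw [win_slice q 0 5 2 (by norm_num)]; exact c0 _ (memF2 q)
  · rw [win_slice q 1 5 2 (by norm_num)]; exact c1 _ (memF2 q)
  · rw [win_slice q 2 5 3 (by norm_num)]; exact c2 _ (memF3 q)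

lemma memF6 (n : ℕ) : win n 6 ∈ F6 := by
  obtain ⟨q, s, hs, rfl⟩ := split3 n
  have c0 : ∀ u ∈ F2, ((expand u).drop 0).take 6 ∈ F6 := by decide
  have c1 : ∀ u ∈ F3, ((expand u).drop 1).take 6 ∈ F6 := by decide
  have c2 : ∀ u ∈ F3, ((expand u).drop 2).take 6 ∈ F6 := by decide
  interval_cases s
  · rw [win_slice q 0 6 2 (by norm_num)]; exact c0 _ (memF2 q)
  · rw [win_slice q 1 6 3 (by norm_num)]; exact c1 _ (memF3 q)
  · rw [win_slice q 2 6 3 (by norm_num)]; exact c2 _ (memF3 q)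

lemma memF7 (n : ℕ) : win n 7 ∈ F7 := by
  obtain ⟨q, s, hs, rfl⟩ := split3 n
  have c0 : ∀ u ∈ F3, ((expand u).drop 0).take 7 ∈ F7 := by decide
  have c1 : ∀ u ∈ F3, ((expand u).drop 1).take 7 ∈ F7 := by decide
  have c2 : ∀ u ∈ F3, ((expand u).drop 2).take 7 ∈ F7 := by decide
  interval_cases s
  · rw [win_slice q 0 7 3 (by norm_num)]; exact c0 _ (memF3 q)
  · rw [win_slice q 1 7 3 (by norm_num)]; exact c1 _ (memF3 q)
  · rw [win_slice q 2 7 3 (by norm_num)]; exact c2 _ (memF3 q)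

lemma memF11 (n : ℕ) : win n 11 ∈ F11 := by
  obtain ⟨q, s, hs, rfl⟩ := split3 n
  have c0 : ∀ u ∈ F4, ((expand u).drop 0).take 11 ∈ F11 := by decide
  have c1 : ∀ u ∈ F4, ((expand u).drop 1).take 11 ∈ F11 := by decide
  have c2 : ∀ u ∈ F5, ((expand u).drop 2).take 11 ∈ F11 := by decide
  interval_cases s
  · rw [win_slice q 0 11 4 (by norm_num)]; exact c0 _ (memF4 q)
  · rw [win_slice q 1 11 4 (by norm_num)]; exact c1 _ (memF4 q)
  · rw [win_slice q 2 11 5 (by norm_num)]; exact c2 _ (memF5 q)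

lemma memF17 (n : ℕ) : win n 17 ∈ F17 := by
  obtain ⟨q, s, hs, rfl⟩ := split3 n
  have c0 : ∀ u ∈ F6, ((expand u).drop 0).take 17 ∈ F17 := by decide
  have c1 : ∀ u ∈ F6, ((expand u).drop 1).take 17 ∈ F17 := by decide
  have c2 : ∀ u ∈ F7, ((expand u).drop 2).take 17 ∈ F17 := by decide
  interval_cases s
  · rw [win_slice q 0 17 6 (by norm_num)]; exact c0 _ (memF6 q)
  · rw [win_slice q 1 17 6 (by norm_num)]; exact c1 _ (memF6 q)
  · rw [win_slice q 2 17 7 (by norm_num)]; exact c2 _ (memF7 q)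

def Pl (s : ℕ) : List (List (Fin 5)) := if s = 0 then P0 else if s = 1 then P1 else P2

lemma memPl (n : ℕ) : win n 3 ∈ Pl (n % 3) := by
  obtain ⟨q, s, hs, rfl⟩ := split3 n
  have hmod : (3*q+s) % 3 = s := by omega
  rw [hmod]
  have c0 : ∀ u ∈ F1, ((expand u).drop 0).take 3 ∈ P0 := by decide
  have c1 : ∀ u ∈ F2, ((expand u).drop 1).take 3 ∈ P1 := by decide
  have c2 : ∀ u ∈ F2, ((expand u).drop 2).take 3 ∈ P2 := by decide
  interval_cases s
  · rw [win_slice q 0 3 1 (by norm_num)]; exact c0 _ (memF1 q)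
  · rw [win_slice q 1 3 2 (by norm_num)]; exact c1 _ (memF2 q)
  · rw [win_slice q 2 3 2 (by norm_num)]; exact c2 _ (memF2 q)

lemma Pl_disj : ∀ x < 3, ∀ y < 3, ∀ u ∈ Pl x, u ∈ Pl y → x = y := by decide

lemma phase {a b : ℕ} (h : win a 3 = win b 3) : a % 3 = b % 3 := by
  have ha := memPl a
  have hb := memPl b
  rw [h] at ha
  exact Pl_disj _ (Nat.mod_lt _ (by norm_num)) _ (Nat.mod_lt _ (by norm_num)) _ ha hb

lemma win_image (t : ℕ) : win (3*t) 3 = [f0 (w t), f1 (w t), f2 (w t)] := by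
  have h : List.range 3 = [0, 1, 2] := rfl
  simp only [win, h, List.map_cons, List.map_nil]
  rw [show 3*t+0 = 3*t by ring, w3, w3a, w3b]

lemma f_inj : ∀ a b : Fin 5, f0 a = f0 b → f1 a = f1 b → f2 a = f2 b → a = b := by decide

def E : ℕ → ℕ
  | 0 => 0 | 1 => 0 | 2 => 1 | 3 => 2 | 4 => 2 | 5 => 2
  | 6 => 4 | 7 => 2 | 8 => 2 | 9 => 7
  | n+10 =>
    have : (n+10)/3 < n+10 := Nat.div_lt_self (by omega) (by norm_num)
    if (n+10) % 3 = 0 then 3 * E ((n+10)/3) + 4 else 2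

lemma E_ge10 (m : ℕ) (hm : 10 ≤ m) :
    E m = if m % 3 = 0 then 3 * E (m/3) + 4 else 2 := by
  obtain ⟨n, rfl⟩ : ∃ n, m = n+10 := ⟨m-10, by omega⟩
  rw [E]

lemma E_le (m : ℕ) (h4 : 4 ≤ m) : E m + 2 ≤ m := by
  induction m using Nat.strong_induction_on with
  | _ m ih =>
    by_cases h9 : m ≤ 9
    · interval_cases m <;> simp [E]
    · rw [E_ge10 m (by omega)]
      by_cases hmod : m % 3 = 0
      · rw [if_pos hmod]
        have h1 : 4 ≤ m / 3 := by omega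
        have h2 := ih (m/3) (by omega) h1
        have h3 := Nat.mul_le_mul_left 3 h2
        omega
      · rw [if_neg hmod]; omega

lemma E_lt (m : ℕ) (h1 : 1 ≤ m) : E m < m := by
  by_cases h4 : 4 ≤ m
  · have := E_le m h4; omega
  · interval_cases m <;> simp [E]

lemma win_getD (i ℓ j : ℕ) (h : j < ℓ) : (win i ℓ).getD j 0 = w (i+j) := by
  have hlen : j < (win i ℓ).length := by simp [win]; omega
  rw [List.getD_eq_getElem _ _ hlen]
  simp [win]

theorem noRep : ∀ m, 1 ≤ m → ∀ i, ¬ (∀ j, j ≤ E m → w (i+j) = w (i+m+j)) := by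
  intro m
  induction m using Nat.strong_induction_on with
  | _ m ih =>
    intro h1 i hyp
    -- helper for base cases
    by_cases hbase : m = 1 ∨ m = 2 ∨ m = 3 ∨ m = 6 ∨ m = 9
    · -- base cases via factor scans
      have transfer : ∀ (L e : ℕ), m + e + 1 ≤ L → e = E m →
          ∀ j < e + 1, (win i L).getD j 0 = (win i L).getD (m+j) 0 := by
        intro L e hL he j hj
        rw [win_getD i L j (by omega), win_getD i L (m+j) (by omega)]
        have := hyp j (by omega)
        rw [show i + (m+j) = i + m + j by omega]
        exact this
      rcases hbase with rfl | rfl | rfl | rfl | rfl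
      · have c : ∀ u ∈ F2, ¬ (∀ j < 1, u.getD j 0 = u.getD (1+j) 0) := by decide
        exact c _ (memF2 i) (transfer 2 0 (by norm_num) (by simp [E]))
      · have c : ∀ u ∈ F4, ¬ (∀ j < 2, u.getD j 0 = u.getD (2+j) 0) := by decide
        exact c _ (memF4 i) (transfer 4 1 (by norm_num) (by simp [E]))
      · have c : ∀ u ∈ F6, ¬ (∀ j < 3, u.getD j 0 = u.getD (3+j) 0) := by decide
        exact c _ (memF6 i) (transfer 6 2 (by norm_num) (by simp [E]))
      · have c : ∀ u ∈ F11, ¬ (∀ j < 5, u.getD j 0 = u.getD (6+j) 0) := by decide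
        exact c _ (memF11 i) (transfer 11 4 (by norm_num) (by simp [E]))
      · have c : ∀ u ∈ F17, ¬ (∀ j < 8, u.getD j 0 = u.getD (9+j) 0) := by decide
        exact c _ (memF17 i) (transfer 17 7 (by norm_num) (by simp [E]))
    · push_neg at hbase
      obtain ⟨hb1, hb2, hb3, hb6, hb9⟩ := hbase
      by_cases hmod : m % 3 = 0
      · -- descent case : m ≥ 12, 3 ∣ m
        have hm12 : 12 ≤ m := by omega
        have hE : E m = 3 * E (m/3) + 4 := by
          rw [E_ge10 m (by omega), if_pos hmod]
        set m' := m / 3 with hm'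
        have hmm : m = 3 * m' := by omega
        have hm'4 : 4 ≤ m' := by omega
        refine ih m' (by omega) (by omega) ((i+2)/3) ?_
        intro j hj
        set T := (i+2)/3 with hT
        have hTl : i ≤ 3*T := by omega
        have hTu : 3*T ≤ i + 2 := by omega
        -- window equality at 3*(T+j)
        have hwin : win (3*(T+j)) 3 = win (3*(T+j)+m) 3 := by
          apply List.ext_getElem (by simp [win])
          intro r hr1 hr2
          simp only [win, List.getElem_map, List.getElem_range, List.length_map, List.length_range] at hr1 hr2 ⊢
          have e1 : 3*(T+j) + r = i + (3*(T+j)+r-i) := by omega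
          have e2 : 3*(T+j) + m + r = i + m + (3*(T+j)+r-i) := by omega
          rw [e1, e2]
          exact hyp _ (by omega)
        rw [show 3*(T+j)+m = 3*(T+j+m') by omega] at hwin
        rw [win_image, win_image] at hwin
        simp only [List.cons.injEq, and_true] at hwin
        obtain ⟨e0, e1, e2⟩ := hwin
        have := f_inj _ _ e0 e1 e2
        rw [show T + j + m' = T + m' + j by omega] at this
        exact this
      · -- phase case : m % 3 ≠ 0, E m = 2
        have hE : E m = 2 := by
          by_cases h9 : m ≤ 9
          · interval_cases m <;> simp_all [E]
          · rw [E_ge10 m (by omega), if_neg hmod]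
        have hwin : win i 3 = win (i+m) 3 := by
          apply List.ext_getElem (by simp [win])
          intro r hr1 hr2
          simp only [win, List.getElem_map, List.getElem_range, List.length_map, List.length_range] at hr1 hr2 ⊢
          exact hyp r (by omega)
        have := phase hwin
        omega

lemma factor_letter {x : List (Fin 5)} {i : ℕ}
    (hfac : x = (List.range x.length).map fun j => w (i+j)) {j : ℕ} (hj : j < x.length) :
    x.getD j 0 = w (i+j) := by
  conv_lhs => rw [hfac]
  rw [List.getD_eq_getElem _ _ (by simpa using hj)]
  simp

theorem w_squarefree (x : List (Fin 5)) (hx : x ≠ []) : ¬ IsFactor (x ++ x) w := by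
  rintro ⟨i, hfac⟩
  set L := x.length with hL
  have hL1 : 1 ≤ L := by
    have := List.length_pos_iff.mpr hx
    omega
  have hlen : (x ++ x).length = L + L := by simp [hL]
  have key : ∀ j < L, w (i+j) = w (i+L+j) := by
    intro j hj
    have h1 : (x++x).getD j 0 = w (i+j) := factor_letter hfac (by omega)
    have h2 : (x++x).getD (L+j) 0 = w (i+(L+j)) := factor_letter hfac (by omega)
    have h3 : (x++x).getD j 0 = x.getD j 0 := by
      rw [List.getD_eq_getElem _ _ (by omega : j < (x++x).length),
          List.getD_eq_getElem _ _ (by omega : j < x.length)]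
      exact List.getElem_append_left (by omega)
    have h4 : (x++x).getD (L+j) 0 = x.getD j 0 := by
      rw [List.getD_eq_getElem _ _ (by omega : L+j < (x++x).length),
          List.getD_eq_getElem _ _ (by omega : j < x.length)]
      rw [List.getElem_append_right (by omega)]
      congr 1
      omega
    rw [← h1, h3, ← h4, h2, show i + (L+j) = i + L + j by omega]
  exact noRep L hL1 i (fun j hj => key j (by have := E_lt L hL1; omega))

theorem w_rev (x : List (Fin 5)) (hfx : IsFactor x w) (hlen : 2 ≤ x.length) :
    ¬ IsFactor x.reverse w := by
  rintro ⟨i', hrev⟩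
  obtain ⟨i, hfac⟩ := hfx
  set L := x.length with hL
  -- forward pair
  have ha : x.getD 0 0 = w i := by
    have := factor_letter hfac (show 0 < L by omega)
    simpa using this
  have hb : x.getD 1 0 = w (i+1) := factor_letter hfac (by omega)
  have hpair1 : [w i, w (i+1)] ∈ F2 := by
    have h : win i 2 = [w i, w (i+1)] := by
      simp [win, List.range_succ]
    rw [← h]; exact memF2 i
  -- reversed pair
  have hrl : x.reverse.length = L := by simp [hL]
  have hc : x.reverse.getD (L-2) 0 = w (i'+(L-2)) := by
    have := factor_letter (x := x.reverse) (by rw [hrl] at hrev ⊢; exact hrev) (j := L-2) (by omega)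
    exact this
  have hd : x.reverse.getD (L-1) 0 = w (i'+(L-1)) := by
    have := factor_letter (x := x.reverse) (by rw [hrl] at hrev ⊢; exact hrev) (j := L-1) (by omega)
    exact this
  have hc2 : x.reverse.getD (L-2) 0 = x.getD 1 0 := by
    rw [List.getD_eq_getElem _ _ (by omega : L-2 < x.reverse.length),
        List.getD_eq_getElem _ _ (by omega : 1 < x.length)]
    rw [List.getElem_reverse]
    congr 1
    omega
  have hd2 : x.reverse.getD (L-1) 0 = x.getD 0 0 := by
    rw [List.getD_eq_getElem _ _ (by omega : L-1 < x.reverse.length),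
        List.getD_eq_getElem _ _ (by omega : 0 < x.length)]
    rw [List.getElem_reverse]
    congr 1
    omega
  have hpair2 : [w (i+1), w i] ∈ F2 := by
    have h : win (i'+(L-2)) 2 = [w (i'+(L-2)), w (i'+(L-2)+1)] := by
      simp [win, List.range_succ]
    have e1 : w (i'+(L-2)) = w (i+1) := by rw [← hc, hc2, hb]
    have e2 : w (i'+(L-2)+1) = w i := by
      rw [show i'+(L-2)+1 = i'+(L-1) by omega, ← hd, hd2, ha]
    have := memF2 (i'+(L-2))
    rw [h, e1, e2] at this
    exact this
  have anti : ∀ a b : Fin 5, [a,b] ∈ F2 → [b,a] ∈ F2 → False := by decide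
  exact anti _ _ hpair1 hpair2

end SQF

/-- There is an infinite squarefree word over a 5-letter alphabet such that if `x` is a
subword with `|x| ≥ 2` then `x^R` is not a subword. -/
theorem stmt_17 :
    ∃ w : ℕ → Fin 5,
      (∀ x : List (Fin 5), x ≠ [] → ¬ IsFactor (x ++ x) w) ∧
      (∀ x : List (Fin 5), IsFactor x w → 2 ≤ x.length → ¬ IsFactor x.reverse w) := by
  exact ⟨SQF.w, SQF.w_squarefree, SQF.w_rev⟩
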